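/- Let I and J be nonempty finite types and let ρ : Matrix (I × J) (I × J) ℂ be positive semidefinite with trace 1, and block diagonal in the first factor: ρ ((k,σ),(l,τ)) = 0 whenever k ≠ l. Then ρ is separable: there exist a finite family of reals λ_t ≥ 0 with ∑_t λ_t = 1 and positive semidefinite trace-1 matrices A_t : Matrix I I ℂ and B_t : Matrix J J ℂ such that ρ = ∑_t λ_t (A_t ⊗ₖ B_t), where ⊗ₖ is the Kronecker product indexed by I × J. -/

import Mathlib

/-!
Write `ρ_k` for the diagonal block `σ, τ ↦ ρ (k, σ) (k, τ)`. Block diagonality says exactly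
`ρ = ∑ₖ |k⟩⟨k| ⊗ ρ_k`, each `ρ_k` is positive semidefinite as a principal submatrix of `ρ`, and
`∑ₖ tr ρ_k = tr ρ = 1`. Normalising, `ρ_k = (tr ρ_k) • B_k` with `B_k` a state (any state when
`ρ_k = 0`), which displays `ρ` as a convex combination of the product states `|k⟩⟨k| ⊗ B_k`.
-/

open scoped ComplexOrder Kronecker

namespace Matrix

variable {n 𝕜 : Type*} [Fintype n]

def IsDensityMatrix [RCLike 𝕜] (A : Matrix n n 𝕜) : Prop :=
  A.PosSemidef ∧ A.trace = 1

theorem isDensityMatrix_diagonal_single [RCLike 𝕜] [DecidableEq n] (i : n) :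
    (diagonal (Pi.single i 1) : Matrix n n 𝕜).IsDensityMatrix :=
  ⟨PosSemidef.diagonal (Pi.single_nonneg.mpr zero_le_one), by simp⟩

theorem PosSemidef.exists_eq_smul_isDensityMatrix [RCLike 𝕜] [Nonempty n] {M : Matrix n n 𝕜}
    (hM : M.PosSemidef) :
    ∃ c : ℝ, 0 ≤ c ∧ (c : 𝕜) = M.trace ∧
      ∃ B : Matrix n n 𝕜, B.IsDensityMatrix ∧ M = (c : 𝕜) • B := by
  classical
  obtain ⟨c, hc, hcM⟩ := RCLike.nonneg_iff_exists_ofReal.mp hM.trace_nonneg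
  refine ⟨c, hc, hcM, ?_⟩
  obtain rfl | hpos := hc.eq_or_lt
  · refine ⟨_, isDensityMatrix_diagonal_single (Classical.arbitrary n), ?_⟩
    rw [RCLike.ofReal_zero, zero_smul]
    exact hM.trace_eq_zero_iff.mp (by rw [← hcM, RCLike.ofReal_zero])
  · have hc0 : (c : 𝕜) ≠ 0 := RCLike.ofReal_ne_zero.mpr hpos.ne'
    refine ⟨(c : 𝕜)⁻¹ • M, ⟨hM.smul ?_, ?_⟩, by rw [smul_smul, mul_inv_cancel₀ hc0, one_smul]⟩
    · rw [← RCLike.ofReal_inv, RCLike.ofReal_nonneg]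
      exact inv_nonneg.mpr hc
    · rw [trace_smul, ← hcM, smul_eq_mul, inv_mul_cancel₀ hc0]

theorem trace_eq_sum_trace_submatrix_prodMk {m α : Type*} [Fintype m] [AddCommMonoid α]
    (ρ : Matrix (n × m) (n × m) α) :
    ρ.trace = ∑ k, (ρ.submatrix (Prod.mk k) (Prod.mk k)).trace :=
  Fintype.sum_prod_type _

theorem eq_sum_diagonal_single_kronecker_submatrix {m α : Type*} [DecidableEq n]
    [NonAssocSemiring α] (ρ : Matrix (n × m) (n × m) α)
    (hblock : ∀ (k l : n) (σ τ : m), k ≠ l → ρ (k, σ) (l, τ) = 0) :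
    ρ = ∑ k, diagonal (Pi.single k 1) ⊗ₖ ρ.submatrix (Prod.mk k) (Prod.mk k) := by
  ext ⟨k, σ⟩ ⟨l, τ⟩
  rw [sum_apply, Finset.sum_eq_single k]
  · obtain rfl | hkl := eq_or_ne k l
    · simp
    · simp [hblock k l σ τ hkl, hkl]
  · intro j _ hjk
    simp [diagonal_apply, hjk.symm]
  · simp

variable {I J : Type*} [Fintype I] [Fintype J]

def IsSeparable (ρ : Matrix (I × J) (I × J) ℂ) : Prop :=
  ∃ (n : ℕ) (lam : Fin n → ℝ) (A : Fin n → Matrix I I ℂ) (B : Fin n → Matrix J J ℂ),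
    (∀ t, 0 ≤ lam t) ∧ (∑ t, lam t = 1) ∧
    (∀ t, (A t).IsDensityMatrix) ∧ (∀ t, (B t).IsDensityMatrix) ∧
    ρ = ∑ t, (lam t : ℂ) • (A t ⊗ₖ B t)

theorem IsSeparable.of_eq_sum {ι : Type*} [Fintype ι] {ρ : Matrix (I × J) (I × J) ℂ}
    (lam : ι → ℝ) (A : ι → Matrix I I ℂ) (B : ι → Matrix J J ℂ) (hlam : ∀ t, 0 ≤ lam t)
    (hsum : ∑ t, lam t = 1) (hA : ∀ t, (A t).IsDensityMatrix) (hB : ∀ t, (B t).IsDensityMatrix)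
    (hρ : ρ = ∑ t, (lam t : ℂ) • (A t ⊗ₖ B t)) : ρ.IsSeparable := by
  let e := (Fintype.equivFin ι).symm
  refine ⟨Fintype.card ι, lam ∘ e, A ∘ e, B ∘ e, fun t => hlam _, ?_, fun t => hA _,
    fun t => hB _, ?_⟩
  · rwa [Function.comp_def, Equiv.sum_comp e lam]
  · rw [hρ]
    exact (Equiv.sum_comp e fun t => (lam t : ℂ) • (A t ⊗ₖ B t)).symm

end Matrix

open Matrix in
theorem block_diagonal_state_is_separable
    {I J : Type*} [Fintype I] [Fintype J] [Nonempty J]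
    (ρ : Matrix (I × J) (I × J) ℂ) (hpsd : ρ.PosSemidef) (htr : ρ.trace = 1)
    (hblock : ∀ (k l : I) (σ τ : J), k ≠ l → ρ (k, σ) (l, τ) = 0) :
    ∃ (n : ℕ) (lam : Fin n → ℝ)
      (A : Fin n → Matrix I I ℂ) (B : Fin n → Matrix J J ℂ),
      (∀ t, 0 ≤ lam t) ∧ (∑ t, lam t = 1) ∧
      (∀ t, (A t).PosSemidef ∧ (A t).trace = 1) ∧
      (∀ t, (B t).PosSemidef ∧ (B t).trace = 1) ∧
      ρ = ∑ t, (lam t : ℂ) • (A t ⊗ₖ B t) := by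
  classical
  choose c hc hcρ B hB hρB using
    fun k => (hpsd.submatrix (Prod.mk k)).exists_eq_smul_isDensityMatrix
  simp only [RCLike.ofReal_eq_complex_ofReal] at hcρ hρB
  refine IsSeparable.of_eq_sum c (fun k => diagonal (Pi.single k 1)) B hc ?_
    isDensityMatrix_diagonal_single hB ?_
  · have : ∑ k, (c k : ℂ) = 1 := by
      simp only [hcρ, ← trace_eq_sum_trace_submatrix_prodMk, htr]
    exact_mod_cast this
  · rw [eq_sum_diagonal_single_kronecker_submatrix ρ hblock]
    refine Finset.sum_congr rfl fun k _ => ?_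
    rw [hρB k, kronecker_smul]
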